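/- An indefinite odd unimodular symmetric bilinear form over ℤ of rank r and signature s with r ≡ s mod 2 and |s| < r is isomorphic to the diagonal form ⟨1⟩^⊕p ⊕ ⟨−1⟩^⊕q where p = (r+s)/2 and q = (r−s)/2, in the special case of rank 2 and signature 0: every odd indefinite unimodular symmetric bilinear form on ℤ² is isomorphic to ⟨1⟩ ⊕ ⟨−1⟩. -/

import Mathlib

/-!
Write `Q = a x² + 2b xy + c y²`. If `det A = 1` then `a Q = (a x + b y)² + y² ≥ 0`, so
indefiniteness forces `det A = -1`, i.e. `a c = b² - 1`. Oddness of `Q` makes `a` or `c` odd;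
swapping the basis vectors we may take `a` odd. Splitting `a ∣ (b + 1)(b - 1)` as `a = G p` with
`G ∣ b + 1` and `p ∣ b - 1`, both factors are odd, and writing `G = p + 2s`, `b + 1 = G (q + 2r)`,
`b - 1 = p q` gives `a = p (p + 2s)`, `b = p q + 1`, `c = q (q + 2r)` with `p r + q s + 2 r s = 1`.
Then `Q = X² - Y²` in the coordinates `X = (p + s) x + (q + r) y`, `Y = s x - r y`, whose
determinant is `-(p r + q s + 2 r s) = -1`.
-/

open Matrix

theorem eq_fin_two_of_transpose_eq {R : Type*} {A : Matrix (Fin 2) (Fin 2) R} (h : Aᵀ = A) :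
    A = !![A 0 0, A 0 1; A 0 1, A 1 1] := by
  conv_lhs => rw [eta_fin_two A]
  rw [show A 1 0 = A 0 1 from congrFun (congrFun h 0) 1]

section CommRing

variable {R : Type*} [CommRing R]

theorem dotProduct_mulVec_fin_two_symm (a b c : R) (x : Fin 2 → R) :
    x ⬝ᵥ !![a, b; b, c] *ᵥ x = a * x 0 ^ 2 + 2 * b * x 0 * x 1 + c * x 1 ^ 2 := by
  simp only [dotProduct, mulVec, of_apply, cons_val', cons_val_fin_one, Fin.sum_univ_two,
    cons_val_zero, cons_val_one]
  ring

theorem swap_transpose_mul_mul_swap (a b c : R) :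
    !![0, 1; 1, 0]ᵀ * !![a, b; b, c] * !![0, 1; 1, 0] = !![c, b; b, a] := by
  ext i j
  fin_cases i <;> fin_cases j <;> simp [mul_apply, Fin.sum_univ_two]

theorem exists_transpose_mul_mul_eq_of_eq_transpose_mul_mul {n : Type*} [Fintype n]
    [DecidableEq n] {A D N : Matrix n n R} (hN : IsUnit N.det) (h : A = Nᵀ * D * N) :
    ∃ P : Matrix n n R, IsUnit P.det ∧ Pᵀ * A * P = D := by
  refine ⟨N⁻¹, isUnit_nonsing_inv_det N hN, ?_⟩
  rw [h, transpose_nonsing_inv, ← mul_assoc, ← mul_assoc, ← transpose_nonsing_inv,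
    ← transpose_mul, mul_assoc (_ * D), mul_nonsing_inv N hN, transpose_one, one_mul, mul_one]

end CommRing

theorem not_indefinite_of_det_pos {R : Type*} [CommRing R] [LinearOrder R]
    [IsStrictOrderedRing R] {a b c : R} (hdet : 0 < a * c - b ^ 2) (x y : Fin 2 → R)
    (hx : 0 < x ⬝ᵥ !![a, b; b, c] *ᵥ x) (hy : y ⬝ᵥ !![a, b; b, c] *ᵥ y < 0) : False := by
  rw [dotProduct_mulVec_fin_two_symm] at hx hy
  have hax : 0 ≤ a * (a * x 0 ^ 2 + 2 * b * x 0 * x 1 + c * x 1 ^ 2) := by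
    nlinarith [sq_nonneg (a * x 0 + b * x 1), sq_nonneg (x 1)]
  have hay : 0 ≤ a * (a * y 0 ^ 2 + 2 * b * y 0 * y 1 + c * y 1 ^ 2) := by
    nlinarith [sq_nonneg (a * y 0 + b * y 1), sq_nonneg (y 1)]
  have ha : a = 0 := le_antisymm (by nlinarith) (by nlinarith)
  subst ha
  nlinarith [sq_nonneg b]

theorem odd_or_odd_of_odd_dotProduct_mulVec {a b c : ℤ} {x : Fin 2 → ℤ}
    (h : Odd (x ⬝ᵥ !![a, b; b, c] *ᵥ x)) : Odd a ∨ Odd c := by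
  rw [dotProduct_mulVec_fin_two_symm] at h
  contrapose! h
  simp only [Int.not_odd_iff_even] at h ⊢
  obtain ⟨⟨a', rfl⟩, c', rfl⟩ := h
  exact ⟨a' * x 0 ^ 2 + b * x 0 * x 1 + c' * x 1 ^ 2, by ring⟩

theorem exists_hyperbolic_param_of_odd {a b c : ℤ} (ha : Odd a) (h : a * c = b ^ 2 - 1) :
    ∃ p q r s : ℤ, p * r + q * s + 2 * r * s = 1 ∧
      a = p * (p + 2 * s) ∧ b = p * q + 1 ∧ c = q * (q + 2 * r) := by
  have ha0 : a ≠ 0 := by rintro rfl; simp at ha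
  obtain ⟨G, p, ⟨k, hk⟩, ⟨q, hq⟩, rfl⟩ := exists_dvd_and_dvd_of_dvd_mul
    (show a ∣ (b + 1) * (b - 1) from ⟨c, by linear_combination -h⟩)
  have hc : c = k * q :=
    mul_left_cancel₀ ha0 (by linear_combination h + (b - 1) * hk + G * k * hq)
  obtain ⟨⟨g, rfl⟩, ⟨p', rfl⟩⟩ := Int.odd_mul.mp ha
  refine ⟨2 * p' + 1, q, 1 - g * k + p' * q, g - p', ?_, ?_, ?_, ?_⟩
  · linear_combination g * (hk - hq)
  · ring
  · linear_combination hq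
  · linear_combination hc - q * (hk - hq)

theorem hyperbolic_param_eq_transpose_mul_mul {p q r s : ℤ}
    (h : p * r + q * s + 2 * r * s = 1) :
    !![p * (p + 2 * s), p * q + 1; p * q + 1, q * (q + 2 * r)] =
      !![p + s, q + r; s, -r]ᵀ * !![1, 0; 0, -1] * !![p + s, q + r; s, -r] := by
  rw [eta_fin_two !![p + s, q + r; s, -r]ᵀ]
  simp only [transpose_apply, of_apply, cons_val', cons_val_zero, cons_val_one, cons_val_fin_one,
    mul_fin_two]
  congrm !![?_, ?_; ?_, ?_]
  · ring
  · linear_combination -h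
  · linear_combination -h
  · ring

theorem exists_eq_transpose_mul_mul_of_odd {a b c : ℤ} (ha : Odd a) (h : a * c = b ^ 2 - 1) :
    ∃ N : Matrix (Fin 2) (Fin 2) ℤ, IsUnit N.det ∧
      !![a, b; b, c] = Nᵀ * !![1, 0; 0, -1] * N := by
  obtain ⟨p, q, r, s, hpqrs, rfl, rfl, rfl⟩ := exists_hyperbolic_param_of_odd ha h
  refine ⟨_, ?_, hyperbolic_param_eq_transpose_mul_mul hpqrs⟩
  rw [det_fin_two_of, show (p + s) * -r - (q + r) * s = -1 by linear_combination -hpqrs]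
  exact isUnit_one.neg

/-- Every odd indefinite unimodular symmetric bilinear form on ℤ² is isomorphic (equivalent over
ℤ, i.e. by a change of basis in `GL(2, ℤ)`) to the diagonal form `⟨1⟩ ⊕ ⟨−1⟩`. -/
theorem stmt17 (A : Matrix (Fin 2) (Fin 2) ℤ) (hsym : Aᵀ = A)
    (huni : A.det = 1 ∨ A.det = -1)
    (hodd : ∃ x : Fin 2 → ℤ, Odd (x ⬝ᵥ A.mulVec x))
    (hindef : (∃ x : Fin 2 → ℤ, 0 < x ⬝ᵥ A.mulVec x) ∧
              (∃ y : Fin 2 → ℤ, y ⬝ᵥ A.mulVec y < 0)) :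
    ∃ P : Matrix (Fin 2) (Fin 2) ℤ, IsUnit P.det ∧
      Pᵀ * A * P = !![1, 0; 0, -1] := by
  obtain ⟨a, b, c, rfl⟩ : ∃ a b c, A = !![a, b; b, c] :=
    ⟨_, _, _, eq_fin_two_of_transpose_eq hsym⟩
  obtain ⟨⟨x, hx⟩, y, hy⟩ := hindef
  have hdet : a * c = b ^ 2 - 1 := by
    rw [det_fin_two_of] at huni
    rcases huni with h | h
    · exact (not_indefinite_of_det_pos (by rw [sq, h]; exact one_pos) x y hx hy).elim
    · linear_combination h
  obtain ⟨z, hz⟩ := hodd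
  obtain ⟨N, hN, hAN⟩ : ∃ N : Matrix (Fin 2) (Fin 2) ℤ, IsUnit N.det ∧
      !![a, b; b, c] = Nᵀ * !![1, 0; 0, -1] * N := by
    rcases odd_or_odd_of_odd_dotProduct_mulVec hz with ha | hc
    · exact exists_eq_transpose_mul_mul_of_odd ha hdet
    · obtain ⟨N, hN, hcba⟩ := exists_eq_transpose_mul_mul_of_odd (b := b) (c := a) hc
        (by linear_combination hdet)
      refine ⟨N * !![0, 1; 1, 0], by simpa [det_fin_two_of] using hN.neg, ?_⟩
      rw [← swap_transpose_mul_mul_swap c b a, hcba]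
      simp only [transpose_mul, mul_assoc]
  exact exists_transpose_mul_mul_eq_of_eq_transpose_mul_mul hN hAN
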